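/- Every finite nonempty connected contractible configuration in the grid that has neither leaves nor 4-cycles containing a NE-corner or NW-corner consists of a single cell. -/

import Mathlib

/-- Two grid cells are adjacent if their L1 (Manhattan) distance is 1. -/
def gridAdj (p q : ℤ × ℤ) : Prop :=
  |p.1 - q.1| + |p.2 - q.2| = 1

/-- Reachability within a set `S` of cells, along grid adjacency. -/
inductive ReachIn (S : Set (ℤ × ℤ)) : ℤ × ℤ → ℤ × ℤ → Prop
  | refl {p : ℤ × ℤ} (hp : p ∈ S) : ReachIn S p p
  | tail {p q r : ℤ × ℤ} (h : ReachIn S p q) (hadj : gridAdj q r) (hr : r ∈ S) :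
      ReachIn S p r

/-- A set of cells is connected (as induced subgraph of the grid). -/
def ConnectedConf (C : Set (ℤ × ℤ)) : Prop :=
  C.Nonempty ∧ ∀ p ∈ C, ∀ q ∈ C, ReachIn C p q

/-- A configuration is contractible if the subgraph of the grid induced by its
complement is connected. -/
def Contractible (C : Set (ℤ × ℤ)) : Prop :=
  ∀ p ∈ Cᶜ, ∀ q ∈ Cᶜ, ReachIn Cᶜ p q

/-- A leaf: a cell of `C` with exactly one neighbor in `C`. -/
def IsLeaf (C : Set (ℤ × ℤ)) (v : ℤ × ℤ) : Prop :=
  v ∈ C ∧ ∃! w, w ∈ C ∧ gridAdj v w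

/-- A NE-corner: a cell of `C` whose neighbors in `C` are exactly the cells
South and West of it. -/
def IsNECorner (C : Set (ℤ × ℤ)) (v : ℤ × ℤ) : Prop :=
  v ∈ C ∧ (v.1 - 1, v.2) ∈ C ∧ (v.1, v.2 - 1) ∈ C ∧
    (v.1 + 1, v.2) ∉ C ∧ (v.1, v.2 + 1) ∉ C

/-- A NW-corner: a cell of `C` whose neighbors in `C` are exactly the cells
South and East of it. -/
def IsNWCorner (C : Set (ℤ × ℤ)) (v : ℤ × ℤ) : Prop :=
  v ∈ C ∧ (v.1 + 1, v.2) ∈ C ∧ (v.1, v.2 - 1) ∈ C ∧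
    (v.1 - 1, v.2) ∉ C ∧ (v.1, v.2 + 1) ∉ C

/-- A hole of `C`: a finite connected component of the complement of `C`. -/
def IsHole (C H : Set (ℤ × ℤ)) : Prop :=
  H.Finite ∧ ∃ p ∈ Cᶜ, H = {q | ReachIn Cᶜ p q}

/-- One elimination step: remove a leaf, or a NE-corner belonging to a 4-cycle,
or a NW-corner belonging to a 4-cycle. -/
def ElimStep (C D : Set (ℤ × ℤ)) : Prop :=
  ∃ v, D = C \ {v} ∧
    (IsLeaf C v ∨ (IsNECorner C v ∧ (v.1 - 1, v.2 - 1) ∈ C) ∨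
      (IsNWCorner C v ∧ (v.1 + 1, v.2 - 1) ∈ C))

/-!
The theorem is proved for a larger class of configurations (`Admissible`), in which one leaf is
allowed provided it lies in the top row: every admissible configuration with at least two cells
contains a smaller one with at least two cells, so by induction there is none.

The smaller configuration is one side of a bridge. A non-leaf end of a row with nothing above it is
a NE- (or NW-) corner, so the cell below its neighbour in the row is empty. That cell and the one
above the neighbour are joined by a walk outside the configuration, and the parity of the number of
crossings with this walk shows that the edge from the end to its neighbour is a bridge. The side of
the end is admissible, its only possible new leaf being the end itself, as soon as it avoids the
leaf and all cells above the row. A top leaf alone in its row is simply deleted, unless this turns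
its neighbour into a corner, in which case the row of the neighbour is cut instead.
-/

open Function

lemma gridAdj_iff {p q : ℤ × ℤ} : gridAdj p q ↔
    q = (p.1 + 1, p.2) ∨ q = (p.1 - 1, p.2) ∨ q = (p.1, p.2 + 1) ∨ q = (p.1, p.2 - 1) := by
  obtain ⟨a, b⟩ := p
  obtain ⟨c, d⟩ := q
  simp only [gridAdj, Prod.mk.injEq]
  rcases abs_cases (a - c) with ⟨h1, _⟩ | ⟨h1, _⟩ <;>
    rcases abs_cases (b - d) with ⟨h2, _⟩ | ⟨h2, _⟩ <;> omega

lemma gridAdj.symm {p q : ℤ × ℤ} (h : gridAdj p q) : gridAdj q p := by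
  rwa [gridAdj, abs_sub_comm, abs_sub_comm q.2]

lemma gridAdj.ne {p q : ℤ × ℤ} (h : gridAdj p q) : p ≠ q := by
  rintro rfl
  simp [gridAdj] at h

namespace ReachIn

variable {S T : Set (ℤ × ℤ)} {p q r : ℤ × ℤ}

lemma mem_left (h : ReachIn S p q) : p ∈ S := by
  induction h with
  | refl hp => exact hp
  | tail _ _ _ ih => exact ih

lemma mem_right (h : ReachIn S p q) : q ∈ S := by
  cases h with
  | refl hp => exact hp
  | tail _ _ hr => exact hr

lemma mono (hST : S ⊆ T) (h : ReachIn S p q) : ReachIn T p q := by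
  induction h with
  | refl hp => exact .refl (hST hp)
  | tail _ hadj hr ih => exact ih.tail hadj (hST hr)

lemma trans (h₁ : ReachIn S p q) (h₂ : ReachIn S q r) : ReachIn S p r := by
  induction h₂ with
  | refl _ => exact h₁
  | tail _ hadj hr ih => exact ih.tail hadj hr

lemma single (hp : p ∈ S) (hq : q ∈ S) (h : gridAdj p q) : ReachIn S p q :=
  (refl hp).tail h hq

lemma symm (h : ReachIn S p q) : ReachIn S q p := by
  induction h with
  | refl hp => exact .refl hp
  | tail h hadj hr ih => exact (single hr h.mem_right hadj.symm).trans ih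

lemma head (hp : p ∈ S) (hpq : gridAdj p q) (h : ReachIn S q r) : ReachIn S p r :=
  (single hp h.mem_left hpq).trans h

lemma avoids_or_exists_first_mem {R : Set (ℤ × ℤ)} (h : ReachIn S p q) :
    ReachIn (S \ R) p q ∨ ∃ t ∈ R, ReachIn (insert t (S \ R)) p t := by
  induction h with
  | refl hp =>
    by_cases hpR : p ∈ R
    · exact .inr ⟨p, hpR, .refl (Set.mem_insert _ _)⟩
    · exact .inl (.refl ⟨hp, hpR⟩)
  | @tail _ r _ hadj hr ih =>
    rcases ih with h' | h'
    · by_cases hrR : r ∈ R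
      · exact .inr ⟨r, hrR, (h'.mono (Set.subset_insert _ _)).tail hadj (Set.mem_insert _ _)⟩
      · exact .inl (h'.tail hadj ⟨hr, hrR⟩)
    · exact .inr h'

lemma exists_first_mem {R : Set (ℤ × ℤ)} (h : ReachIn S p q) (hq : q ∈ R) :
    ∃ t ∈ R, ReachIn (insert t (S \ R)) p t :=
  h.avoids_or_exists_first_mem.resolve_left fun h' => h'.mem_right.2 hq

end ReachIn

lemma reachIn_row {D : Set (ℤ × ℤ)} {a b y : ℤ} (hab : a ≤ b)
    (h : ∀ t, a ≤ t → t ≤ b → (t, y) ∈ D) : ReachIn D (a, y) (b, y) := by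
  induction b, hab using Int.leInduction with
  | base => exact .refl (h a le_rfl le_rfl)
  | succ b hab ih =>
    exact (ih fun t h₁ h₂ => h t h₁ (by omega)).tail (by simp [gridAdj])
      (h _ (by omega) le_rfl)

lemma exists_run_east {D : Set (ℤ × ℤ)} (hfin : D.Finite) {x y : ℤ} (hx : (x, y) ∈ D) :
    ∃ r, x ≤ r ∧ (∀ t, x ≤ t → t ≤ r → (t, y) ∈ D) ∧ (r + 1, y) ∉ D := by
  by_contra! h
  have hrun : ∀ n : ℕ, ∀ t, x ≤ t → t ≤ x + n → (t, y) ∈ D := by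
    intro n
    induction n with
    | zero => intro t h₁ h₂; rwa [show t = x by omega]
    | succ n ih =>
      intro t h₁ h₂
      rcases lt_or_eq_of_le h₂ with h₂ | rfl
      · exact ih t h₁ (by omega)
      · simpa [add_assoc] using h _ (by omega) ih
  refine Set.infinite_of_injective_forall_mem (f := fun n : ℕ => (x + n, y)) ?_
    (fun n => hrun n _ (by omega) le_rfl) hfin
  intro m n hmn
  simpa using hmn

section Mirror

/-- The reflection in the vertical axis, which exchanges NE- and NW-corners: it turns the eastern
arguments below into western ones. -/
def mirror (p : ℤ × ℤ) : ℤ × ℤ := (-p.1, p.2)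

@[simp] lemma mirror_mk (x y : ℤ) : mirror (x, y) = (-x, y) := rfl

@[simp] lemma mirror_mirror (p : ℤ × ℤ) : mirror (mirror p) = p := by simp [mirror]

lemma mirror_injective : Injective mirror :=
  Involutive.injective mirror_mirror

@[simp] lemma preimage_mirror_mirror (D : Set (ℤ × ℤ)) :
    mirror ⁻¹' (mirror ⁻¹' D) = D := by
  ext
  simp

lemma ncard_preimage_mirror (D : Set (ℤ × ℤ)) : (mirror ⁻¹' D).ncard = D.ncard :=
  Set.ncard_preimage_of_injective_subset_range mirror_injective
    fun p _ => ⟨mirror p, mirror_mirror p⟩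

@[simp] lemma gridAdj_mirror {p q : ℤ × ℤ} :
    gridAdj (mirror p) (mirror q) ↔ gridAdj p q := by
  simp only [gridAdj, mirror, neg_sub_neg]
  rw [abs_sub_comm q.1]

variable {D : Set (ℤ × ℤ)}

lemma ReachIn.preimage_mirror {p q : ℤ × ℤ} (h : ReachIn D p q) :
    ReachIn (mirror ⁻¹' D) (mirror p) (mirror q) := by
  induction h with
  | refl hp => exact .refl (by simpa using hp)
  | tail _ hadj hr ih => exact ih.tail (gridAdj_mirror.2 hadj) (by simpa using hr)

lemma ConnectedConf.preimage_mirror (h : ConnectedConf D) : ConnectedConf (mirror ⁻¹' D) :=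
  ⟨⟨mirror h.1.some, by simpa using h.1.some_mem⟩,
    fun p hp q hq => by simpa using (h.2 _ hp _ hq).preimage_mirror⟩

lemma Contractible.preimage_mirror (h : Contractible D) : Contractible (mirror ⁻¹' D) :=
  fun p hp q hq => by simpa using (h _ hp _ hq).preimage_mirror

lemma IsLeaf.preimage_mirror {v : ℤ × ℤ} (h : IsLeaf D v) :
    IsLeaf (mirror ⁻¹' D) (mirror v) := by
  obtain ⟨hv, w, ⟨hw, hadj⟩, huniq⟩ := h
  refine ⟨by simpa using hv, mirror w, ⟨by simpa using hw, gridAdj_mirror.2 hadj⟩,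
    fun t ⟨ht, htadj⟩ => ?_⟩
  rw [← huniq (mirror t) ⟨ht, by simpa using gridAdj_mirror.2 htadj⟩, mirror_mirror]

lemma mem_preimage_mirror_of {x x' y : ℤ} (h : (x', y) ∈ D) (hx : x' = -x) :
    (x, y) ∈ mirror ⁻¹' D := by
  subst hx
  exact h

lemma not_mem_preimage_mirror_of {x x' y : ℤ} (h : (x', y) ∉ D) (hx : x' = -x) :
    (x, y) ∉ mirror ⁻¹' D := by
  subst hx
  exact h

lemma isLeaf_preimage_mirror {v : ℤ × ℤ} :
    IsLeaf (mirror ⁻¹' D) v ↔ IsLeaf D (mirror v) :=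
  ⟨fun h => by simpa using h.preimage_mirror, fun h => by simpa using h.preimage_mirror⟩

lemma isNECorner_preimage_mirror {v : ℤ × ℤ} :
    IsNECorner (mirror ⁻¹' D) v ↔ IsNWCorner D (mirror v) := by
  simp only [IsNECorner, IsNWCorner, Set.mem_preimage, mirror]
  ring_nf

lemma isNWCorner_preimage_mirror {v : ℤ × ℤ} :
    IsNWCorner (mirror ⁻¹' D) v ↔ IsNECorner D (mirror v) := by
  simp only [IsNECorner, IsNWCorner, Set.mem_preimage, mirror]
  ring_nf

lemma exists_run_west (hfin : D.Finite) {x y : ℤ} (hx : (x, y) ∈ D) :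
    ∃ l, l ≤ x ∧ (∀ t, l ≤ t → t ≤ x → (t, y) ∈ D) ∧ (l - 1, y) ∉ D := by
  obtain ⟨r, hxr, hrun, hr⟩ := exists_run_east (hfin.preimage mirror_injective.injOn)
    (show (-x, y) ∈ mirror ⁻¹' D by simpa)
  refine ⟨-r, by omega, fun t h₁ h₂ => by simpa using hrun (-t) (by omega) (by omega), ?_⟩
  rw [show -r - 1 = -(r + 1) by ring]
  exact hr

end Mirror

def quadInd (z u : ℤ × ℤ) : ZMod 2 := if u.1 < z.1 ∧ z.2 < u.2 then 1 else 0

lemma quadInd_step {q r z z' : ℤ × ℤ} (hqr : gridAdj q r) (hzz' : gridAdj z z')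
    (hperp : q.2 = r.2 ↔ z.1 = z'.1) (hq : q ≠ z ∧ q ≠ z') (hr : r ≠ z ∧ r ≠ z') :
    quadInd z q + quadInd z r = quadInd z' q + quadInd z' r := by
  obtain ⟨q1, q2⟩ := q
  obtain ⟨z1, z2⟩ := z
  rcases gridAdj_iff.1 hqr with rfl | rfl | rfl | rfl <;>
    rcases gridAdj_iff.1 hzz' with rfl | rfl | rfl | rfl <;>
    simp only [quadInd, ne_eq, Prod.mk.injEq, true_iff, iff_true] at hperp hq hr ⊢ <;>
    split_ifs <;> first | decide | (exfalso; omega)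

/-- Crossing parities of a walk from `m` to `o` outside `D`: `H z` counts the horizontal steps of
the walk crossing the vertical boundary of the open quadrant north-west of `z`, `V z` the vertical
steps crossing its horizontal boundary. -/
lemma exists_crossing_parities {D : Set (ℤ × ℤ)} {m o : ℤ × ℤ} (h : ReachIn Dᶜ m o) :
    ∃ H V : ℤ × ℤ → ZMod 2, (∀ z, H z + V z = quadInd z m + quadInd z o) ∧
      (∀ z ∈ D, ∀ z' ∈ D, gridAdj z z' → z.1 = z'.1 → H z = H z') ∧
      (∀ z ∈ D, ∀ z' ∈ D, gridAdj z z' → z.2 = z'.2 → V z = V z') := by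
  induction h with
  | refl _ => exact ⟨0, 0, fun z => by simp [CharTwo.add_self_eq_zero], by simp, by simp⟩
  | @tail q r hq hqr hr ih =>
    obtain ⟨H, V, hsum, hH, hV⟩ := ih
    have hstep : ∀ z ∈ D, ∀ z' ∈ D, gridAdj z z' → (q.2 = r.2 ↔ z.1 = z'.1) →
        quadInd z q + quadInd z r = quadInd z' q + quadInd z' r := fun z hz z' hz' hzz' hperp =>
      quadInd_step hqr hzz' hperp
        ⟨fun h => hq.mem_right (h ▸ hz), fun h => hq.mem_right (h ▸ hz')⟩
        ⟨fun h => hr (h ▸ hz), fun h => hr (h ▸ hz')⟩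
    by_cases hrow : q.2 = r.2
    · refine ⟨fun z => H z + (quadInd z q + quadInd z r), V, fun z => ?_,
        fun z hz z' hz' hzz' hcol => ?_, hV⟩
      · linear_combination hsum z + CharTwo.add_self_eq_zero (quadInd z q)
      · exact congrArg₂ (· + ·) (hH z hz z' hz' hzz' hcol)
          (hstep z hz z' hz' hzz' (iff_of_true hrow hcol))
    · refine ⟨H, fun z => V z + (quadInd z q + quadInd z r), fun z => ?_, hH,
        fun z hz z' hz' hzz' hrow' => ?_⟩
      · linear_combination hsum z + CharTwo.add_self_eq_zero (quadInd z q)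
      · have hcol : z.1 ≠ z'.1 := fun h => hzz'.ne (Prod.ext h hrow')
        exact congrArg₂ (· + ·) (hV z hz z' hz' hzz' hrow')
          (hstep z hz z' hz' hzz' (iff_of_false hrow hcol))

lemma quadInd_pocket {s y : ℤ} {u t : ℤ × ℤ} (hadj : gridAdj u t) (hrow : u.2 = t.2)
    (hu : u ≠ (s, y - 1)) (ht : t ≠ (s, y - 1)) (hab : s(u, t) ≠ s((s, y), (s + 1, y))) :
    quadInd u (s, y - 1) + quadInd u (s, y + 1) = quadInd t (s, y - 1) + quadInd t (s, y + 1) := by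
  obtain ⟨u1, u2⟩ := u
  rcases gridAdj_iff.1 hadj with rfl | rfl | rfl | rfl <;>
    simp only [quadInd, ne_eq, Prod.mk.injEq, Sym2.eq_iff] at hrow hu ht hab ⊢ <;>
    split_ifs <;> first | decide | (exfalso; omega)

/-- `S` is the side of `b` once the edge `ab` of `D` is cut: no other edge of `D` leaves `S`. -/
structure IsBridgeSide (D S : Set (ℤ × ℤ)) (a b : ℤ × ℤ) : Prop where
  subset : S ⊆ D
  left_mem : a ∈ D
  left_not_mem : a ∉ S
  right_mem : b ∈ S
  mem_iff : ∀ u ∈ D, ∀ t ∈ D, gridAdj u t → s(u, t) ≠ s(a, b) → (u ∈ S ↔ t ∈ S)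

/-- A horizontal edge of a contractible configuration with empty cells just above and below its
left end is a bridge: a walk outside `D` joins these two cells, and its crossing parity separates
the two ends of the edge. -/
lemma exists_bridgeSide {D : Set (ℤ × ℤ)} (hD : Contractible D) {s y : ℤ} (ha : (s, y) ∈ D)
    (hb : (s + 1, y) ∈ D) (hm : (s, y - 1) ∉ D) (ho : (s, y + 1) ∉ D) :
    ∃ S, IsBridgeSide D S (s, y) (s + 1, y) := by
  obtain ⟨H, V, hsum, hH, hV⟩ := exists_crossing_parities (hD _ hm _ ho)
  have hcut : ∀ u ∈ D, ∀ t ∈ D, gridAdj u t → s(u, t) ≠ s((s, y), (s + 1, y)) →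
      H u = H t := by
    intro u hu t ht hadj hab
    by_cases hcol : u.1 = t.1
    · exact hH u hu t ht hadj hcol
    have hrow : u.2 = t.2 := by
      rcases gridAdj_iff.1 hadj with rfl | rfl | rfl | rfl <;> simp_all
    linear_combination hsum u - hsum t - hV u hu t ht hadj hrow +
      quadInd_pocket hadj hrow (ne_of_mem_of_not_mem hu hm) (ne_of_mem_of_not_mem ht hm) hab
  have hflip : H (s, y) ≠ H (s + 1, y) := by
    intro h
    have ha' : H (s, y) + V (s, y) = 0 := by simpa [quadInd] using hsum (s, y)
    have hb' : H (s + 1, y) + V (s + 1, y) = 1 := by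
      simpa [quadInd, show ¬ y < y - 1 by omega] using hsum (s + 1, y)
    rw [h, hV _ ha _ hb (by simp [gridAdj]) rfl, hb'] at ha'
    exact one_ne_zero ha'
  refine ⟨{z | z ∈ D ∧ H z = H (s + 1, y)}, fun z hz => hz.1, ha, fun h => hflip h.2,
    ⟨hb, rfl⟩, fun u hu t ht hadj hab => ?_⟩
  simp only [Set.mem_ofPred_eq, hu, ht, true_and, hcut u hu t ht hadj hab]

namespace IsBridgeSide

variable {D S : Set (ℤ × ℤ)} {a b u t : ℤ × ℤ}

lemma mem_of_adj (hS : IsBridgeSide D S a b) (hu : u ∈ S) (ht : t ∈ D) (hadj : gridAdj u t)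
    (hta : t ≠ a) : t ∈ S := by
  refine (hS.mem_iff u (hS.subset hu) t ht hadj ?_).1 hu
  rw [ne_eq, Sym2.eq_iff]
  rintro (⟨rfl, -⟩ | ⟨-, rfl⟩)
  · exact hS.left_not_mem hu
  · exact hta rfl

lemma eq_of_adj_left (hS : IsBridgeSide D S a b) (hu : u ∈ S) (hadj : gridAdj u a) : u = b := by
  by_contra hub
  refine hS.left_not_mem ((hS.mem_iff u (hS.subset hu) a hS.left_mem hadj ?_).1 hu)
  rw [ne_eq, Sym2.eq_iff]
  rintro (⟨rfl, -⟩ | ⟨rfl, -⟩)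
  · exact hS.left_not_mem hu
  · exact hub rfl

lemma mem_of_adj_of_ne (hS : IsBridgeSide D S a b) (hu : u ∈ S) (hub : u ≠ b) (ht : t ∈ D)
    (hadj : gridAdj u t) : t ∈ S :=
  hS.mem_of_adj hu ht hadj fun hta => hub (hS.eq_of_adj_left hu (hta ▸ hadj))

lemma isLeaf (hS : IsBridgeSide D S a b) (h : IsLeaf S u) (hub : u ≠ b) : IsLeaf D u := by
  obtain ⟨hu, w, ⟨hw, hadj⟩, huniq⟩ := h
  exact ⟨hS.subset hu, w, ⟨hS.subset hw, hadj⟩,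
    fun t ⟨ht, htadj⟩ => huniq t ⟨hS.mem_of_adj_of_ne hu hub ht htadj, htadj⟩⟩

lemma isNECorner (hS : IsBridgeSide D S a b) (h : IsNECorner S u) (hub : u ≠ b) :
    IsNECorner D u := by
  obtain ⟨hu, hW, hSo, hE, hN⟩ := h
  exact ⟨hS.subset hu, hS.subset hW, hS.subset hSo,
    fun h => hE (hS.mem_of_adj_of_ne hu hub h (by simp [gridAdj])),
    fun h => hN (hS.mem_of_adj_of_ne hu hub h (by simp [gridAdj]))⟩

lemma isNWCorner (hS : IsBridgeSide D S a b) (h : IsNWCorner S u) (hub : u ≠ b) :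
    IsNWCorner D u := by
  obtain ⟨hu, hE, hSo, hW, hN⟩ := h
  exact ⟨hS.subset hu, hS.subset hE, hS.subset hSo,
    fun h => hW (hS.mem_of_adj_of_ne hu hub h (by simp [gridAdj])),
    fun h => hN (hS.mem_of_adj_of_ne hu hub h (by simp [gridAdj]))⟩

lemma reachIn_of_reachIn (hS : IsBridgeSide D S a b) (h : ReachIn D b u) :
    (u ∈ S → ReachIn S b u) ∧ (u ∉ S → ReachIn (D \ S) a u) := by
  induction h with
  | refl _ => exact ⟨fun _ => .refl hS.right_mem, fun h => absurd hS.right_mem h⟩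
  | @tail x y hx hadj hy ih =>
    by_cases he : s(x, y) = s(a, b)
    · rcases Sym2.eq_iff.1 he with ⟨-, rfl⟩ | ⟨-, rfl⟩
      · exact ⟨fun _ => .refl hS.right_mem, fun h => absurd hS.right_mem h⟩
      · exact ⟨fun h => absurd h hS.left_not_mem,
          fun _ => .refl ⟨hS.left_mem, hS.left_not_mem⟩⟩
    · have hiff := hS.mem_iff x hx.mem_right y hy hadj he
      exact ⟨fun h => (ih.1 (hiff.2 h)).tail hadj h,
        fun h => (ih.2 (mt hiff.1 h)).tail hadj ⟨hy, h⟩⟩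

lemma connectedConf (hS : IsBridgeSide D S a b) (hD : ConnectedConf D) : ConnectedConf S := by
  have h : ∀ z ∈ S, ReachIn S b z := fun z hz =>
    (hS.reachIn_of_reachIn (hD.2 b (hS.subset hS.right_mem) z (hS.subset hz))).1 hz
  exact ⟨⟨b, hS.right_mem⟩, fun p hp q hq => (h p hp).symm.trans (h q hq)⟩

/-- The complement of `S` is that of `D` together with the other side of the bridge. -/
lemma contractible (hS : IsBridgeSide D S a b) (hD : ConnectedConf D) (hC : Contractible D)
    {c : ℤ × ℤ} (hc : c ∉ D) (hac : gridAdj a c) : Contractible S := by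
  have h : ∀ x ∉ S, ReachIn Sᶜ x c := by
    intro x hx
    by_cases hxD : x ∈ D
    · have hax := (hS.reachIn_of_reachIn (hD.2 b (hS.subset hS.right_mem) x hxD)).2 hx
      exact (hax.symm.mono fun z hz => hz.2).tail hac fun h => hc (hS.subset h)
    · exact (hC x hxD c hc).mono fun z (hz : z ∉ D) h => hz (hS.subset h)
  exact fun p hp q hq => (h p hp).trans (h q hq).symm

lemma mem_iff_of_reachIn (hS : IsBridgeSide D S a b) (h : ReachIn (D \ {b}) u t) :
    u ∈ S ↔ t ∈ S := by
  induction h with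
  | refl _ => rfl
  | @tail x y hx hadj hy ih =>
    refine ih.trans (hS.mem_iff x hx.mem_right.1 y hy.1 hadj ?_)
    rw [ne_eq, Sym2.eq_iff]
    rintro (⟨-, rfl⟩ | ⟨rfl, -⟩)
    · exact hy.2 rfl
    · exact hx.mem_right.2 rfl

lemma not_mem_of_reachIn (hS : IsBridgeSide D S a b) (h : ReachIn (D \ {b}) u a) : u ∉ S :=
  fun hu => hS.left_not_mem ((hS.mem_iff_of_reachIn h).1 hu)

lemma ncard_lt (hS : IsBridgeSide D S a b) (hfin : D.Finite) : S.ncard < D.ncard :=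
  Set.ncard_lt_ncard ⟨hS.subset, fun h => hS.left_not_mem (h hS.left_mem)⟩ hfin

end IsBridgeSide

lemma ConnectedConf.exists_adj {D : Set (ℤ × ℤ)} (h : ConnectedConf D) (h2 : 2 ≤ D.ncard)
    {x : ℤ × ℤ} (hx : x ∈ D) : ∃ t ∈ D, gridAdj x t := by
  obtain ⟨y, hy, hyx⟩ := Set.exists_ne_of_one_lt_ncard h2 x
  cases h.2 y hy x hx with
  | refl _ => exact absurd rfl hyx
  | tail hq hadj _ => exact ⟨_, hq.mem_right, hadj.symm⟩

/-- The configurations of the induction: besides the hypotheses of the theorem, a single leaf is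
allowed, provided it lies in the top row. -/
structure Admissible (D : Set (ℤ × ℤ)) : Prop where
  connected : ConnectedConf D
  contractible : Contractible D
  leaf_unique : ∀ u v, IsLeaf D u → IsLeaf D v → u = v
  leaf_top : ∀ u, IsLeaf D u → ∀ x ∈ D, x.2 ≤ u.2
  ne_corner : ∀ v, IsNECorner D v → (v.1 - 1, v.2 - 1) ∉ D
  nw_corner : ∀ v, IsNWCorner D v → (v.1 + 1, v.2 - 1) ∉ D

def AdmissibleBelow (n : ℕ) : Prop :=
  ∃ E : Set (ℤ × ℤ), E.Finite ∧ Admissible E ∧ 2 ≤ E.ncard ∧ E.ncard < n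

lemma IsBridgeSide.admissible {D S : Set (ℤ × ℤ)} {a b c : ℤ × ℤ}
    (hS : IsBridgeSide D S a b) (hD : Admissible D) (hc : c ∉ D) (hac : gridAdj a c)
    (hleaf : ∀ u ∈ S, ¬IsLeaf D u) (htop : ∀ u ∈ S, u.2 ≤ b.2) (hne : IsNECorner S b → (b.1 - 1, b.2 - 1) ∉ S)
    (hnw : IsNWCorner S b → (b.1 + 1, b.2 - 1) ∉ S) : Admissible S := by
  have hleaf_eq : ∀ u, IsLeaf S u → u = b := fun u hu =>
    by_contra fun hub => hleaf u hu.1 (hS.isLeaf hu hub)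
  refine ⟨hS.connectedConf hD.connected, hS.contractible hD.connected hD.contractible hc hac,
    fun u v hu hv => (hleaf_eq u hu).trans (hleaf_eq v hv).symm,
    fun u hu x hx => hleaf_eq u hu ▸ htop x hx, fun v hv => ?_, fun v hv => ?_⟩
  · by_cases hvb : v = b
    · exact hvb ▸ hne (hvb ▸ hv)
    · exact fun h => hD.ne_corner v (hS.isNECorner hv hvb) (hS.subset h)
  · by_cases hvb : v = b
    · exact hvb ▸ hnw (hvb ▸ hv)
    · exact fun h => hD.nw_corner v (hS.isNWCorner hv hvb) (hS.subset h)

namespace Admissible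

variable {D : Set (ℤ × ℤ)}

lemma preimage_mirror (hD : Admissible D) : Admissible (mirror ⁻¹' D) := by
  refine ⟨hD.connected.preimage_mirror, hD.contractible.preimage_mirror,
    fun u v hu hv => mirror_injective (hD.leaf_unique _ _ (isLeaf_preimage_mirror.1 hu)
      (isLeaf_preimage_mirror.1 hv)),
    fun u hu x hx => hD.leaf_top _ (isLeaf_preimage_mirror.1 hu) (mirror x) hx,
    fun v hv hd => hD.nw_corner _ (isNECorner_preimage_mirror.1 hv) ?_,
    fun v hv hd => hD.ne_corner _ (isNWCorner_preimage_mirror.1 hv) ?_⟩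
  · have hd' : (-(v.1 - 1), v.2 - 1) ∈ D := hd
    convert hd' using 2 <;> simp only [mirror]
    ring
  · have hd' : (-(v.1 + 1), v.2 - 1) ∈ D := hd
    convert hd' using 2 <;> simp only [mirror]
    ring

/-- The end `(s + 1, y)` is a NE-corner, whose 4-cycle `(s, y - 1)` would complete. -/
lemma pocket_of_eastEnd (hD : Admissible D) {s y : ℤ} (ha : (s, y) ∈ D) (hb : (s + 1, y) ∈ D)
    (hbl : ¬IsLeaf D (s + 1, y)) (hE : (s + 2, y) ∉ D) (hN : (s + 1, y + 1) ∉ D) :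
    (s + 1, y - 1) ∈ D ∧ (s, y - 1) ∉ D := by
  have hE' : (s + 1 + 1, y) ∉ D := by rwa [add_assoc, one_add_one_eq_two]
  have hS : (s + 1, y - 1) ∈ D := by
    by_contra hS
    refine hbl ⟨hb, (s, y), ⟨ha, by simp [gridAdj]⟩, fun t ⟨ht, hadj⟩ => ?_⟩
    rcases gridAdj_iff.1 hadj with rfl | rfl | rfl | rfl
    · exact absurd ht hE'
    · simp
    · exact absurd ht hN
    · exact absurd ht hS
  refine ⟨hS, ?_⟩
  simpa using hD.ne_corner _ ⟨hb, by simpa using ha, hS, hE', hN⟩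

lemma admissibleBelow_of_eastEnd (hfin : D.Finite) (hD : Admissible D) {s y : ℤ}
    (ha : (s, y) ∈ D) (hb : (s + 1, y) ∈ D) (hbl : ¬IsLeaf D (s + 1, y))
    (hE : (s + 2, y) ∉ D) (hbN : (s + 1, y + 1) ∉ D) (haN : (s, y + 1) ∉ D)
    (hreach : ∀ u ∈ D, IsLeaf D u ∨ y < u.2 → ReachIn (D \ {(s + 1, y)}) u (s, y)) :
    AdmissibleBelow D.ncard := by
  obtain ⟨hbS, hm⟩ := hD.pocket_of_eastEnd ha hb hbl hE hbN
  obtain ⟨S, hS⟩ := exists_bridgeSide hD.contractible ha hb hm haN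
  have hbS' : (s + 1, y - 1) ∈ S :=
    hS.mem_of_adj hS.right_mem hbS (by simp [gridAdj]) (by simp)
  refine ⟨S, hfin.subset hS.subset, hS.admissible hD haN (by simp [gridAdj])
    (fun u hu hl => hS.not_mem_of_reachIn (hreach u (hS.subset hu) (.inl hl)) hu)
    (fun u hu => not_lt.1 fun h => hS.not_mem_of_reachIn (hreach u (hS.subset hu) (.inr h)) hu)
    (fun h _ => hS.left_not_mem (by simpa using h.2.1))
    (fun h _ => hE (by simpa [add_assoc, one_add_one_eq_two] using hS.subset h.2.1)), ?_,
    hS.ncard_lt hfin⟩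
  calc 2 = ({(s + 1, y), (s + 1, y - 1)} : Set (ℤ × ℤ)).ncard :=
        (Set.ncard_pair (by simp; omega)).symm
    _ ≤ S.ncard := Set.ncard_le_ncard (Set.insert_subset hS.right_mem
        (Set.singleton_subset_iff.2 hbS')) (hfin.subset hS.subset)

lemma admissibleBelow_of_westEnd (hfin : D.Finite) (hD : Admissible D) {s y : ℤ}
    (ha : (s + 1, y) ∈ D) (hb : (s, y) ∈ D) (hbl : ¬IsLeaf D (s, y)) (hW : (s - 1, y) ∉ D)
    (hbN : (s, y + 1) ∉ D) (haN : (s + 1, y + 1) ∉ D)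
    (hreach : ∀ u ∈ D, IsLeaf D u ∨ y < u.2 → ReachIn (D \ {(s, y)}) u (s + 1, y)) :
    AdmissibleBelow D.ncard := by
  rw [← ncard_preimage_mirror]
  refine hD.preimage_mirror.admissibleBelow_of_eastEnd (hfin.preimage mirror_injective.injOn)
    (s := -s - 1) (mem_preimage_mirror_of ha (by ring)) (mem_preimage_mirror_of hb (by ring))
    (by simpa [isLeaf_preimage_mirror] using hbl) (not_mem_preimage_mirror_of hW (by ring))
    (not_mem_preimage_mirror_of hbN (by ring)) (not_mem_preimage_mirror_of haN (by ring))
    fun u hu hu' => ?_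
  have h := (hreach (mirror u) hu
    (by simpa [isLeaf_preimage_mirror, mirror] using hu')).preimage_mirror
  rw [mirror_mirror, show mirror (s + 1, y) = (-s - 1, y) by simp [mirror]; ring] at h
  convert h using 2
  ext p
  simp [mirror, Prod.ext_iff, neg_eq_iff_eq_neg]

lemma admissibleBelow_of_leaf_east (hfin : D.Finite) (hD : Admissible D) {x y : ℤ}
    (hv : IsLeaf D (x, y)) (hE : (x + 1, y) ∈ D) : AdmissibleBelow D.ncard := by
  have htop := hD.leaf_top _ hv
  have habove : ∀ t, (t, y + 1) ∉ D := fun t h => by simpa using htop _ h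
  obtain ⟨r, hxr, hrun, hr⟩ := exists_run_east hfin hE
  obtain ⟨s, rfl⟩ : ∃ s, r = s + 1 := ⟨r - 1, by ring⟩
  have hrun' : ∀ t, x ≤ t → t ≤ s + 1 → (t, y) ∈ D := fun t h₁ h₂ =>
    if h : t = x then h ▸ hv.1 else hrun t (by omega) h₂
  refine hD.admissibleBelow_of_eastEnd hfin (hrun' s (by omega) (by omega))
    (hrun' _ (by omega) le_rfl) (fun h => absurd (hD.leaf_unique _ _ h hv) (by simp; omega))
    (by rwa [add_assoc, one_add_one_eq_two] at hr) (habove _) (habove _) fun u hu hu' => ?_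
  rcases hu' with hu' | hu'
  · rw [hD.leaf_unique _ _ hu' hv]
    exact reachIn_row (by omega) fun t h₁ h₂ => ⟨hrun' t h₁ (by omega), by simp; omega⟩
  · exact absurd (htop u hu) (by omega)

lemma admissibleBelow_of_leaf_west (hfin : D.Finite) (hD : Admissible D) {x y : ℤ}
    (hv : IsLeaf D (x, y)) (hW : (x - 1, y) ∈ D) : AdmissibleBelow D.ncard := by
  rw [← ncard_preimage_mirror]
  exact hD.preimage_mirror.admissibleBelow_of_leaf_east (hfin.preimage mirror_injective.injOn)
    (x := -x) (by simpa [isLeaf_preimage_mirror] using hv) (mem_preimage_mirror_of hW (by ring))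

/-- A walk from the leaf, if there is one, first meets a top run at one of its cells; the end of
the run away from that cell is then cut off. -/
lemma admissibleBelow_of_topRun (hfin : D.Finite) (hD : Admissible D) {l r y : ℤ} (hlr : l < r)
    (hrun : ∀ t, l ≤ t → t ≤ r → (t, y) ∈ D) (hl : (l - 1, y) ∉ D)
    (hr : (r + 1, y) ∉ D)
    (htop : ∀ u ∈ D, u.2 ≤ y) (hnl : ∀ t, l ≤ t → t ≤ r → ¬IsLeaf D (t, y)) :
    AdmissibleBelow D.ncard := by
  have habove : ∀ t, (t, y + 1) ∉ D := fun t h => by simpa using htop _ h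
  obtain ⟨s, rfl⟩ : ∃ s, r = s + 1 := ⟨r - 1, by ring⟩
  have east : (∀ u, IsLeaf D u → ReachIn (D \ {(s + 1, y)}) u (s, y)) →
      AdmissibleBelow D.ncard := fun h =>
    hD.admissibleBelow_of_eastEnd hfin (hrun s (by omega) (by omega)) (hrun _ (by omega) le_rfl)
      (hnl _ (by omega) le_rfl) (by rwa [add_assoc, one_add_one_eq_two] at hr) (habove _)
      (habove _) fun u hu hu' => hu'.elim (h u) fun h => absurd (htop u hu) (by omega)
  have west : (∀ u, IsLeaf D u → ReachIn (D \ {(l, y)}) u (l + 1, y)) →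
      AdmissibleBelow D.ncard := fun h =>
    hD.admissibleBelow_of_westEnd hfin (hrun _ (by omega) (by omega)) (hrun l le_rfl (by omega))
      (hnl l le_rfl (by omega)) hl (habove _) (habove _)
      fun u hu hu' => hu'.elim (h u) fun h => absurd (htop u hu) (by omega)
  by_cases hv : ∃ v, IsLeaf D v
  swap
  · exact east fun u hu => absurd ⟨u, hu⟩ hv
  obtain ⟨v, hv⟩ := hv
  have hunique : ∀ u, IsLeaf D u → u = v := fun u hu => hD.leaf_unique _ _ hu hv
  set R : Set (ℤ × ℤ) := {p | p.2 = y ∧ l ≤ p.1 ∧ p.1 ≤ s + 1}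
  obtain ⟨⟨t, y'⟩, ⟨hy', hlt, hts⟩, hvt⟩ :=
    (hD.connected.2 v hv.1 _ (hrun l le_rfl (by omega))).exists_first_mem
      (R := R) ⟨rfl, le_rfl, by omega⟩
  dsimp only at hy' hlt hts
  subst y'
  have hsub : ∀ c, l ≤ c → c ≤ s + 1 → c ≠ t →
      insert (t, y) (D \ R) ⊆ D \ {(c, y)} := by
    intro c h₁ h₂ hct
    refine Set.insert_subset ⟨hrun t hlt hts, by simp; omega⟩ fun p hp => ⟨hp.1, ?_⟩
    rintro rfl
    exact hp.2 ⟨rfl, h₁, h₂⟩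
  by_cases htl : t = l
  · subst htl
    refine east fun u hu => hunique u hu ▸ ?_
    exact (hvt.mono (hsub _ (by omega) le_rfl (by omega))).trans
      (reachIn_row (by omega) fun c h₁ h₂ => ⟨hrun c h₁ (by omega), by simp; omega⟩)
  · refine west fun u hu => hunique u hu ▸ ?_
    exact (hvt.mono (hsub _ le_rfl (by omega) (Ne.symm htl))).trans <| ReachIn.symm <|
      reachIn_row (by omega) fun c h₁ h₂ => ⟨hrun c (by omega) (by omega), by simp; omega⟩

lemma admissibleBelow_of_topRow (hfin : D.Finite) (hD : Admissible D) (h2 : 2 ≤ D.ncard)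
    {x y : ℤ} (hx : (x, y) ∈ D) (htop : ∀ u ∈ D, u.2 ≤ y) (hxl : ¬IsLeaf D (x, y))
    (hleaf : ∀ v, IsLeaf D v → (v.1 - 1, v.2) ∉ D ∧ (v.1 + 1, v.2) ∉ D) :
    AdmissibleBelow D.ncard := by
  obtain ⟨l, hlx, hrunl, hl⟩ := exists_run_west hfin hx
  obtain ⟨r, hxr, hrunr, hr⟩ := exists_run_east hfin hx
  have hrun : ∀ t, l ≤ t → t ≤ r → (t, y) ∈ D := fun t h₁ h₂ =>
    if h : t ≤ x then hrunl t h₁ h else hrunr t (by omega) h₂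
  have hlr : l < r := by
    by_contra! hrl
    have hsouth : ∀ t ∈ D, gridAdj (x, y) t → t = (x, y - 1) := by
      intro t ht hadj
      rcases gridAdj_iff.1 hadj with rfl | rfl | rfl | rfl
      · exact absurd ht (by convert hr using 3; omega)
      · exact absurd ht (by convert hl using 3; omega)
      · exact absurd (htop _ ht) (by simp)
      · rfl
    obtain ⟨t, ht, hadj⟩ := hD.connected.exists_adj h2 hx
    exact hxl ⟨hx, t, ⟨ht, hadj⟩, fun t' ⟨ht', hadj'⟩ =>
      (hsouth t' ht' hadj').trans (hsouth t ht hadj).symm⟩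
  refine hD.admissibleBelow_of_topRun hfin hlr hrun hl hr htop fun t h₁ h₂ ht => ?_
  obtain ⟨hW, hE⟩ := hleaf _ ht
  rcases lt_or_eq_of_le h₂ with h₂ | rfl
  · exact hE (hrun _ (by omega) (by omega))
  · exact hW (hrun _ (by omega) (by omega))

/-- The row of the neighbour `(x, y - 1)` of the deleted leaf is cut at its east end. -/
lemma admissibleBelow_of_isNWCorner_diff (hfin : D.Finite) (hD : Admissible D) {x y : ℤ}
    (hv : IsLeaf D (x, y)) (hsole : ∀ u ∈ D, u ≠ (x, y) → u.2 < y)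
    (hNW : IsNWCorner (D \ {(x, y)}) (x, y - 1)) :
    AdmissibleBelow D.ncard := by
  obtain ⟨⟨hw, -⟩, ⟨hE, -⟩, ⟨hS, -⟩, -, -⟩ := hNW
  have hrow : ∀ t ≠ x, (t, y) ∉ D := fun t ht h =>
    by simpa using hsole _ h (by simpa using ht)
  have hunique : ∀ u ∈ D, IsLeaf D u ∨ y - 1 < u.2 → u = (x, y) := by
    rintro u hu (hu' | hu')
    · exact hD.leaf_unique _ _ hu' hv
    · by_contra h
      exact absurd (hsole u hu h) (by omega)
  obtain ⟨r, hxr, hrun, hr⟩ := exists_run_east hfin hE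
  obtain ⟨s, rfl⟩ : ∃ s, r = s + 1 := ⟨r - 1, by ring⟩
  have hrun' : ∀ t, x ≤ t → t ≤ s + 1 → (t, y - 1) ∈ D := fun t h₁ h₂ =>
    if h : t = x then h ▸ hw else hrun t (by omega) h₂
  have hs : x ≤ s := by omega
  have hbl : ¬IsLeaf D (s + 1, y - 1) := fun h => by simpa using hunique _ h.1 (.inl h)
  have hE' : (s + 2, y - 1) ∉ D := by rwa [add_assoc, one_add_one_eq_two] at hr
  have hN : ∀ t ≠ x, (t, y - 1 + 1) ∉ D := fun t ht => by simpa using hrow t ht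
  obtain ⟨-, hm⟩ := hD.pocket_of_eastEnd (hrun' s hs (by omega)) (hrun' _ (by omega) le_rfl) hbl
    hE' (hN _ (by omega))
  have hsx : s ≠ x := by
    rintro rfl
    exact hm hS
  refine hD.admissibleBelow_of_eastEnd hfin (hrun' s hs (by omega)) (hrun' _ (by omega) le_rfl)
    hbl hE' (hN _ (by omega)) (hN _ hsx) fun u hu hu' => ?_
  rw [hunique u hu hu']
  exact ReachIn.head ⟨hv.1, by simp; omega⟩ (by simp [gridAdj])
    (reachIn_row hs fun t h₁ h₂ => ⟨hrun' t h₁ (by omega), by simp; omega⟩)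

lemma admissibleBelow_of_isNECorner_diff (hfin : D.Finite) (hD : Admissible D) {x y : ℤ}
    (hv : IsLeaf D (x, y)) (hsole : ∀ u ∈ D, u ≠ (x, y) → u.2 < y)
    (hNE : IsNECorner (D \ {(x, y)}) (x, y - 1)) :
    AdmissibleBelow D.ncard := by
  have hdiff : mirror ⁻¹' (D \ {(x, y)}) = mirror ⁻¹' D \ {(-x, y)} := by
    ext p
    simp [mirror, Prod.ext_iff, neg_eq_iff_eq_neg]
  rw [← ncard_preimage_mirror]
  refine hD.preimage_mirror.admissibleBelow_of_isNWCorner_diff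
    (hfin.preimage mirror_injective.injOn) (x := -x) (by simpa [isLeaf_preimage_mirror] using hv)
    (fun u hu hne => hsole (mirror u) hu ?_) ?_
  · rintro h
    exact hne (by rw [← mirror_mirror u, h]; simp)
  · rw [← hdiff, isNWCorner_preimage_mirror]
    simpa using hNE

/-- A top leaf alone in its row is deleted, unless its neighbour then becomes a corner. -/
lemma admissibleBelow_of_sole_top_leaf (hfin : D.Finite) (hD : Admissible D) {x y : ℤ}
    (hv : IsLeaf D (x, y)) (hw : (x, y - 1) ∈ D) (hsole : ∀ u ∈ D, u ≠ (x, y) → u.2 < y) :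
    AdmissibleBelow D.ncard := by
  have hnbr : ∀ t ∈ D, gridAdj (x, y) t → t = (x, y - 1) := fun t ht hadj =>
    hv.2.unique ⟨ht, hadj⟩ ⟨hw, by simp [gridAdj]⟩
  have hS : IsBridgeSide D (D \ {(x, y)}) (x, y) (x, y - 1) := by
    refine ⟨Set.sdiff_subset, hv.1, fun h => h.2 rfl, ⟨hw, by simp⟩,
      fun u hu t ht hadj hne => ?_⟩
    simp only [Set.mem_sdiff, Set.mem_singleton_iff, hu, ht, true_and]
    constructor
    · rintro hux rfl
      exact hne (by rw [hnbr u hu hadj.symm, Sym2.eq_swap])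
    · rintro htx rfl
      exact hne (by rw [hnbr t ht hadj])
  by_cases hNW : IsNWCorner (D \ {(x, y)}) (x, y - 1)
  · exact hD.admissibleBelow_of_isNWCorner_diff hfin hv hsole hNW
  by_cases hNE : IsNECorner (D \ {(x, y)}) (x, y - 1)
  · exact hD.admissibleBelow_of_isNECorner_diff hfin hv hsole hNE
  have hA : Admissible (D \ {(x, y)}) :=
    hS.admissible hD (c := (x, y + 1)) (fun h => by simpa using hsole _ h (by simp))
      (by simp [gridAdj]) (fun u hu hl => hu.2 (hD.leaf_unique _ _ hl hv))
      (fun u hu => show u.2 ≤ y - 1 by linarith [hsole u hu.1 hu.2])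
      (fun h => absurd h hNE) (fun h => absurd h hNW)
  refine ⟨_, hfin.sdiff, hA, ?_, hS.ncard_lt hfin⟩
  -- otherwise `(x, y - 1)` would be a second leaf
  by_contra! hlt
  have hone : ∀ t ∈ D \ {(x, y)}, t = (x, y - 1) := fun t ht =>
    (Set.ncard_le_one hfin.sdiff).1 (by omega) t ht _ hS.right_mem
  have hwl : IsLeaf D (x, y - 1) := by
    refine ⟨hw, (x, y), ⟨hv.1, by simp [gridAdj]⟩, fun t ⟨ht, hadj⟩ => ?_⟩
    by_contra htx
    exact hadj.ne (hone t ⟨ht, htx⟩).symm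
  simpa using hD.leaf_unique _ _ hwl hv

lemma admissibleBelow_of_leaf_south (hfin : D.Finite) (hD : Admissible D) (h2 : 2 ≤ D.ncard)
    {x y : ℤ} (hv : IsLeaf D (x, y)) (hw : (x, y - 1) ∈ D) : AdmissibleBelow D.ncard := by
  have htop := hD.leaf_top _ hv
  have hnbr : ∀ t ∈ D, gridAdj (x, y) t → t = (x, y - 1) := fun t ht hadj =>
    hv.2.unique ⟨ht, hadj⟩ ⟨hw, by simp [gridAdj]⟩
  by_cases hrow : ∃ u ∈ D, u.2 = y ∧ u ≠ (x, y)
  · obtain ⟨⟨x', _⟩, hu, rfl, hne⟩ := hrow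
    refine hD.admissibleBelow_of_topRow hfin h2 hu htop (fun h => hne (hD.leaf_unique _ _ h hv))
      fun u hu' => ?_
    rw [hD.leaf_unique _ _ hu' hv]
    exact ⟨fun h => by simpa using hnbr _ h (by simp [gridAdj]),
      fun h => by simpa using hnbr _ h (by simp [gridAdj])⟩
  exact hD.admissibleBelow_of_sole_top_leaf hfin hv hw fun u hu hne =>
    lt_of_le_of_ne (htop u hu) fun h => hrow ⟨u, hu, h, hne⟩

lemma admissibleBelow (hfin : D.Finite) (hD : Admissible D) (h2 : 2 ≤ D.ncard) :
    AdmissibleBelow D.ncard := by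
  by_cases hv : ∃ v, IsLeaf D v
  · obtain ⟨⟨x, y⟩, hv⟩ := hv
    obtain ⟨w, ⟨hw, hadj⟩, -⟩ := hv.2
    rcases gridAdj_iff.1 hadj with rfl | rfl | rfl | rfl
    · exact hD.admissibleBelow_of_leaf_east hfin hv hw
    · exact hD.admissibleBelow_of_leaf_west hfin hv hw
    · exact absurd (hD.leaf_top _ hv _ hw) (by simp)
    · exact hD.admissibleBelow_of_leaf_south hfin h2 hv hw
  · obtain ⟨⟨x, y⟩, hx, htop⟩ := Set.exists_max_image D Prod.snd hfin hD.connected.1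
    exact hD.admissibleBelow_of_topRow hfin h2 hx htop (fun h => hv ⟨_, h⟩)
      fun v h => absurd ⟨v, h⟩ hv

lemma ncard_le_one (hfin : D.Finite) (hD : Admissible D) : D.ncard ≤ 1 := by
  induction h : D.ncard using Nat.strong_induction_on generalizing D with
  | _ n ih =>
    by_contra! h2
    obtain ⟨E, hE, hEa, hE2, hElt⟩ := hD.admissibleBelow hfin (by omega)
    have := ih _ (h ▸ hElt) hE hEa rfl
    omega

end Admissible

/-- Every finite nonempty connected contractible configuration with neither
leaves nor 4-cycles containing a NE-corner or a NW-corner is a single cell. -/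
theorem single_cell_of_no_leaf_no_corner (C : Set (ℤ × ℤ)) (hfin : C.Finite)
    (hconn : ConnectedConf C) (hcontr : Contractible C)
    (hleaf : ∀ v, ¬ IsLeaf C v)
    (hne : ∀ v, IsNECorner C v → (v.1 - 1, v.2 - 1) ∉ C)
    (hnw : ∀ v, IsNWCorner C v → (v.1 + 1, v.2 - 1) ∉ C) :
    ∃ v, C = {v} := by
  have hC : Admissible C :=
    ⟨hconn, hcontr, fun u _ hu => absurd hu (hleaf u), fun u hu => absurd hu (hleaf u),
      hne, hnw⟩
  exact Set.ncard_eq_one.1 (le_antisymm (hC.ncard_le_one hfin) ((Set.ncard_pos hfin).2 hconn.1))
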